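/- arXiv:2201.03235 — 2 statements merged into one kernel-verified Lean document; each statement's English description precedes it below -/
import Mathlib

section
/- Let X and K be finite-dimensional real Hilbert spaces, b ∈ K, and let 𝔏 : X → K be a bounded linear operator such that range 𝔏 = K and 𝔏*𝔏 = P_V, the orthogonal projection onto V := range 𝔏* ⊆ X. Define the affine map 𝔄x := 𝔏x + b. Then for every proper lower-semicontinuous convex function ψ on K and every γ > 0, the Moreau envelope satisfies (⁽γ⁾(ψ ∘ 𝔄))(x) = (⁽γ⁾ψ)(𝔄x) for all x ∈ X. -/
/-! Write `V` for the range of `𝔏*`. Since `ker 𝔏 = Vᗮ`, the hypothesis `𝔏*𝔏 = P_V` gives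
`𝔏𝔏*𝔏 = 𝔏 P_V = 𝔏`, so `𝔏𝔏* = 1` by surjectivity: `𝔏*` is an isometric right inverse of `𝔏`.
Also `‖𝔏x‖² = ⟪P_V x, x⟫ = ‖P_V x‖² ≤ ‖x‖²`, so `𝔄` is `1`-Lipschitz. The first fact lets every
`w` be reached as `w = 𝔄u` with `u = x - 𝔏*(𝔄x - w)` and `‖x - u‖ = ‖𝔄x - w‖`, so
`(ᵞ(ψ ∘ 𝔄))(x) ≤ (ᵞψ)(𝔄x)`; the second gives the reverse inequality by testing `ᵞψ` at `w = 𝔄u`. -/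

noncomputable def moreauEnv {E : Type*} [SeminormedAddCommGroup E] (γ : ℝ) (f : E → EReal) (x : E) :
    EReal :=
  ⨅ y, f y + ((‖x - y‖ ^ 2 / (2 * γ) : ℝ) : EReal)

theorem moreauEnv_comp_eq {E F : Type*} [SeminormedAddCommGroup E] [SeminormedAddCommGroup F]
    {γ : ℝ} (hγ : 0 ≤ γ) (f : F → EReal) {A : E → F}
    (hA : ∀ x y, ‖A x - A y‖ ≤ ‖x - y‖) (hsec : ∀ x w, ∃ y, A y = w ∧ ‖x - y‖ = ‖A x - w‖)
    (x : E) : moreauEnv γ (f ∘ A) x = moreauEnv γ f (A x) := by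
  apply le_antisymm
  · refine le_iInf fun w => ?_
    obtain ⟨y, rfl, hy⟩ := hsec x w
    exact iInf_le_of_le y (by rw [Function.comp_apply, hy])
  · refine le_iInf fun y => iInf_le_of_le (A y) ?_
    show f (A y) + _ ≤ f (A y) + _
    gcongr
    exact hA x y

namespace ContinuousLinearMap

variable {𝕜 E F : Type*} [RCLike 𝕜]
  [NormedAddCommGroup E] [InnerProductSpace 𝕜 E] [CompleteSpace E]
  [NormedAddCommGroup F] [InnerProductSpace 𝕜 F] [CompleteSpace F]
  {T : E →L[𝕜] F}

theorem norm_adjoint_apply_of_self_comp_adjoint_eq_one (h : T ∘L adjoint T = 1) (y : F) :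
    ‖adjoint T y‖ = ‖y‖ :=
  (norm_map_iff_adjoint_comp_self (adjoint T)).2 (by rwa [adjoint_adjoint]) y

variable [(LinearMap.range (adjoint T : F →ₗ[𝕜] E)).HasOrthogonalProjection]

theorem apply_starProjection_range_adjoint (x : E) :
    T ((LinearMap.range (adjoint T : F →ₗ[𝕜] E)).starProjection x) = T x := by
  have hker :=
    Submodule.sub_starProjection_mem_orthogonal (K := LinearMap.range (adjoint T : F →ₗ[𝕜] E)) x
  rw [orthogonal_range, adjoint_adjoint, LinearMap.mem_ker, coe_coe, map_sub, sub_eq_zero] at hker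
  exact hker.symm

theorem norm_apply_le_of_adjoint_comp_self_eq_starProjection (hT : ∀ x : E,
    adjoint T (T x) = ((LinearMap.range (adjoint T : F →ₗ[𝕜] E)).orthogonalProjectionOnto x : E))
    (x : E) : ‖T x‖ ≤ ‖x‖ := by
  have h := T.apply_norm_sq_eq_inner_adjoint_left x
  rw [comp_apply, hT, ← Submodule.starProjection_apply, Submodule.re_inner_starProjection_eq_normSq,
    pow_left_inj₀ (norm_nonneg _) (norm_nonneg _) two_ne_zero] at h
  exact h ▸ Submodule.norm_orthogonalProjectionOnto_apply_le _ x

theorem self_comp_adjoint_eq_one_of_adjoint_comp_self_eq_starProjection (hT : ∀ x : E,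
    adjoint T (T x) = ((LinearMap.range (adjoint T : F →ₗ[𝕜] E)).orthogonalProjectionOnto x : E))
    (hsurj : Function.Surjective T) : T ∘L adjoint T = 1 := by
  ext k
  obtain ⟨x, rfl⟩ := hsurj k
  rw [comp_apply, hT, ← Submodule.starProjection_apply, apply_starProjection_range_adjoint]
  rfl

end ContinuousLinearMap

theorem moreauEnv_affine_composition_general
    {X K : Type*}
    [NormedAddCommGroup X] [InnerProductSpace ℝ X] [FiniteDimensional ℝ X]
    [NormedAddCommGroup K] [InnerProductSpace ℝ K] [FiniteDimensional ℝ K]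
    (L : X →L[ℝ] K) (b : K) (hsurj : Function.Surjective L)
    (hproj : ∀ x : X,
      (ContinuousLinearMap.adjoint L) (L x) =
        (Submodule.orthogonalProjectionOnto (LinearMap.range (ContinuousLinearMap.adjoint L : K →ₗ[ℝ] X)) x : X))
    (ψ : K → EReal)
    (γ : ℝ) (hγ : 0 < γ) :
    ∀ x : X,
      (⨅ u : X, (ψ (L u + b) + ((‖x - u‖ ^ 2 / (2 * γ) : ℝ) : EReal)))
        = ⨅ w : K, (ψ w + ((‖(L x + b) - w‖ ^ 2 / (2 * γ) : ℝ) : EReal)) := by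
  have hright := L.self_comp_adjoint_eq_one_of_adjoint_comp_self_eq_starProjection hproj hsurj
  refine moreauEnv_comp_eq hγ.le ψ (A := fun u => L u + b) (fun y z => ?_)
    (fun y w => ⟨y - L.adjoint (L y + b - w), ?_, ?_⟩)
  · rw [add_sub_add_right_eq_sub, ← map_sub]
    exact L.norm_apply_le_of_adjoint_comp_self_eq_starProjection hproj _
  · rw [map_sub, ← L.comp_apply, hright, one_apply_eq_self]
    abel
  · rw [sub_sub_cancel, L.norm_adjoint_apply_of_self_comp_adjoint_eq_one hright]

/-- Lemma 3 of the paper, first identity.  If `𝔏 : X → K` is a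
surjective bounded linear operator with `𝔏*𝔏 = P_V` (the orthogonal projection onto
`V = range 𝔏*`), then for every proper l.s.c. convex `ψ : K → (−∞,+∞]` and `γ > 0`,
the Moreau envelope of `ψ ∘ 𝔄` (with `𝔄x = 𝔏x + b`) satisfies
`(ᵞ(ψ ∘ 𝔄))(x) = (ᵞψ)(𝔄x)` for all `x`. -/
theorem moreauEnv_affine_composition
    {X K : Type*}
    [NormedAddCommGroup X] [InnerProductSpace ℝ X] [FiniteDimensional ℝ X]
    [NormedAddCommGroup K] [InnerProductSpace ℝ K] [FiniteDimensional ℝ K]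
    (L : X →L[ℝ] K) (b : K) (hsurj : Function.Surjective L)
    (hproj : ∀ x : X,
      (ContinuousLinearMap.adjoint L) (L x) =
        (Submodule.orthogonalProjectionOnto (LinearMap.range (ContinuousLinearMap.adjoint L : K →ₗ[ℝ] X)) x : X))
    (ψ : K → EReal) (hbot : ∀ u, ψ u ≠ ⊥) (htop : ∃ u, ψ u ≠ ⊤)
    (hlsc : LowerSemicontinuous ψ)
    (hconv : Convex ℝ {p : K × ℝ | ψ p.1 ≤ (p.2 : EReal)})
    (γ : ℝ) (hγ : 0 < γ) :
    ∀ x : X,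
      (⨅ u : X, (ψ (L u + b) + ((‖x - u‖ ^ 2 / (2 * γ) : ℝ) : EReal)))
        = ⨅ w : K, (ψ w + ((‖(L x + b) - w‖ ^ 2 / (2 * γ) : ℝ) : EReal)) :=
  moreauEnv_affine_composition_general L b hsurj hproj ψ γ hγ
end

section
/- Let X and K be finite-dimensional real Hilbert spaces, b ∈ K, and let 𝔏 : X → K be a bounded linear operator such that range 𝔏 = K and 𝔏*𝔏 = P_V, the orthogonal projection onto V := range 𝔏* ⊆ X. Define the affine map 𝔄x := 𝔏x + b. Then for every proper lower-semicontinuous convex function ψ on K and every γ > 0, the Moreau-enhanced functions satisfy (ψ ∘ 𝔄)_{γ^{-1/2}I}(x) = (ψ_{γ^{-1/2}I})(𝔄x) for all x ∈ X, where for a function f the Moreau enhancement is f_{γ^{-1/2}I} := f − ⁽γ⁾f. -/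
/-!
The affine map `𝔄 = 𝔏 + b` is nonexpansive, since `‖𝔏v‖² = ⟪𝔏*𝔏v, v⟫ = ‖P_V v‖² ≤ ‖v‖²`.
Conversely, surjectivity and `𝔏*𝔏 = P_V` give `𝔏𝔏* = id`, so `𝔏*` is an isometry and every
`w ∈ K` has the preimage `x - 𝔏*(𝔄x - w)` at distance exactly `‖𝔄x - w‖` from `x`. Hence the
infimum defining `⁽γ⁾(ψ ∘ 𝔄)(x)` equals the one defining `⁽γ⁾ψ(𝔄x)`.
-/

open scoped InnerProduct

noncomputable def moreauEnvelope {E : Type*} [SeminormedAddCommGroup E] (f : E → EReal) (γ : ℝ)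
    (x : E) : EReal :=
  ⨅ y, f y + ((‖x - y‖ ^ 2 / (2 * γ) : ℝ) : EReal)

theorem moreauEnvelope_comp_of_exists_preimage_norm_eq {X K : Type*}
    [SeminormedAddCommGroup X] [SeminormedAddCommGroup K] (f : K → EReal) {A : X → K} (x : X)
    (hA : ∀ u, ‖A x - A u‖ ≤ ‖x - u‖) (hpre : ∀ w, ∃ u, A u = w ∧ ‖x - u‖ = ‖A x - w‖)
    {γ : ℝ} (hγ : 0 ≤ γ) :
    moreauEnvelope (f ∘ A) γ x = moreauEnvelope f γ (A x) := by
  refine le_antisymm (le_iInf fun w => ?_) (le_iInf fun u => ?_)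
  · obtain ⟨u, rfl, hu⟩ := hpre w
    exact (iInf_le _ u).trans_eq (by rw [Function.comp_apply, hu])
  · refine (iInf_le _ (A u)).trans (add_le_add_right ?_ _)
    gcongr
    exact hA u

namespace ContinuousLinearMap

variable {𝕜 X K : Type*} [RCLike 𝕜]
  [NormedAddCommGroup X] [InnerProductSpace 𝕜 X] [CompleteSpace X]
  [NormedAddCommGroup K] [InnerProductSpace 𝕜 K] [CompleteSpace K]

theorem apply_starProjection_range_adjoint_s13 (L : X →L[𝕜] K) [L†.range.HasOrthogonalProjection]
    (x : X) : L (L†.range.starProjection x) = L x := by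
  have hker : x - L†.range.starProjection x ∈ L.ker := by
    simpa [orthogonal_range] using L†.range.sub_starProjection_mem_orthogonal x
  rw [LinearMap.mem_ker, coe_coe, map_sub, sub_eq_zero] at hker
  exact hker.symm

variable {L : X →L[𝕜] K} [L†.range.HasOrthogonalProjection]

theorem apply_adjoint_apply_of_surjective (hsurj : Function.Surjective L)
    (hproj : ∀ x, (L†) (L x) = L†.range.starProjection x) (y : K) : L ((L†) y) = y := by
  obtain ⟨x, rfl⟩ := hsurj y
  rw [hproj, apply_starProjection_range_adjoint_s13]

theorem norm_apply_le_of_adjoint_comp_eq_starProjection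
    (hproj : ∀ x, (L†) (L x) = L†.range.starProjection x) (x : X) : ‖L x‖ ≤ ‖x‖ := by
  have hsq : ‖L x‖ ^ 2 = ‖L†.range.orthogonalProjectionOnto x‖ ^ 2 := by
    rw [← inner_self_eq_norm_sq (𝕜 := 𝕜), ← adjoint_inner_left, hproj,
      Submodule.re_inner_starProjection_eq_normSq]
  calc ‖L x‖ = ‖L†.range.orthogonalProjectionOnto x‖ := by
        rwa [sq_eq_sq₀ (norm_nonneg _) (norm_nonneg _)] at hsq
    _ ≤ ‖x‖ := Submodule.norm_orthogonalProjectionOnto_apply_le _ x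

omit [L†.range.HasOrthogonalProjection] in
theorem norm_adjoint_apply_of_apply_adjoint (h : ∀ y, L ((L†) y) = y) (y : K) :
    ‖(L†) y‖ = ‖y‖ := by
  have hsq : ‖(L†) y‖ ^ 2 = ‖y‖ ^ 2 := by
    rw [← inner_self_eq_norm_sq (𝕜 := 𝕜), ← inner_self_eq_norm_sq (𝕜 := 𝕜), adjoint_inner_left, h]
  rwa [sq_eq_sq₀ (norm_nonneg _) (norm_nonneg _)] at hsq

end ContinuousLinearMap

theorem moreauEnhanced_affine_composition_general
    {X K : Type*}
    [NormedAddCommGroup X] [InnerProductSpace ℝ X] [FiniteDimensional ℝ X]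
    [NormedAddCommGroup K] [InnerProductSpace ℝ K] [FiniteDimensional ℝ K]
    (L : X →L[ℝ] K) (b : K) (hsurj : Function.Surjective L)
    (hproj : ∀ x : X,
      (ContinuousLinearMap.adjoint L) (L x) =
        (Submodule.orthogonalProjectionOnto (LinearMap.range (ContinuousLinearMap.adjoint L : K →ₗ[ℝ] X)) x : X))
    (ψ : K → EReal)
    (γ : ℝ) (hγ : 0 < γ) :
    ∀ x : X,
      ψ (L x + b) - (⨅ u : X, (ψ (L u + b) + ((‖x - u‖ ^ 2 / (2 * γ) : ℝ) : EReal)))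
        = ψ (L x + b) -
            ⨅ w : K, (ψ w + ((‖(L x + b) - w‖ ^ 2 / (2 * γ) : ℝ) : EReal)) := by
  intro x
  have hnonexp (u : X) : ‖(L x + b) - (L u + b)‖ ≤ ‖x - u‖ := by
    rw [add_sub_add_right_eq_sub, ← map_sub]
    exact L.norm_apply_le_of_adjoint_comp_eq_starProjection hproj _
  have hpre (w : K) : ∃ u, L u + b = w ∧ ‖x - u‖ = ‖(L x + b) - w‖ := by
    have hLL := L.apply_adjoint_apply_of_surjective hsurj hproj
    refine ⟨x - (L†) (L x + b - w), ?_, ?_⟩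
    · rw [map_sub, hLL]
      abel
    · rw [sub_sub_cancel, L.norm_adjoint_apply_of_apply_adjoint hLL]
  exact congrArg (ψ (L x + b) - ·)
    (moreauEnvelope_comp_of_exists_preimage_norm_eq ψ x hnonexp hpre hγ.le)

/-- Lemma 3 of the paper, second identity.  If `𝔏 : X → K` is a
surjective bounded linear operator with `𝔏*𝔏 = P_V` (the orthogonal projection onto
`V = range 𝔏*`), then for every proper l.s.c. convex `ψ : K → (−∞,+∞]` and `γ > 0`,
the Moreau-enhanced functions (`f_{γ^{-1/2}I} = f − ᵞf`) satisfy
`(ψ ∘ 𝔄)_{γ^{-1/2}I}(x) = (ψ_{γ^{-1/2}I})(𝔄x)` for all `x`, with `𝔄x = 𝔏x + b`. -/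
theorem moreauEnhanced_affine_composition
    {X K : Type*}
    [NormedAddCommGroup X] [InnerProductSpace ℝ X] [FiniteDimensional ℝ X]
    [NormedAddCommGroup K] [InnerProductSpace ℝ K] [FiniteDimensional ℝ K]
    (L : X →L[ℝ] K) (b : K) (hsurj : Function.Surjective L)
    (hproj : ∀ x : X,
      (ContinuousLinearMap.adjoint L) (L x) =
        (Submodule.orthogonalProjectionOnto (LinearMap.range (ContinuousLinearMap.adjoint L : K →ₗ[ℝ] X)) x : X))
    (ψ : K → EReal) (hbot : ∀ u, ψ u ≠ ⊥) (htop : ∃ u, ψ u ≠ ⊤)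
    (hlsc : LowerSemicontinuous ψ)
    (hconv : Convex ℝ {p : K × ℝ | ψ p.1 ≤ (p.2 : EReal)})
    (γ : ℝ) (hγ : 0 < γ) :
    ∀ x : X,
      ψ (L x + b) - (⨅ u : X, (ψ (L u + b) + ((‖x - u‖ ^ 2 / (2 * γ) : ℝ) : EReal)))
        = ψ (L x + b) -
            ⨅ w : K, (ψ w + ((‖(L x + b) - w‖ ^ 2 / (2 * γ) : ℝ) : EReal)) :=
  moreauEnhanced_affine_composition_general L b hsurj hproj ψ γ hγ
end
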